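/- Let Π be a private-coin SMP protocol computing a Boolean function f : X × Y → {0,1} with worst-case error at most ε, with message sets M_A, M_B, and let δ > 0 and t = ⌈(log₂|M_B| + 2)/(2δ²·log₂ e)⌉. Then there exists a private-coin SMP protocol Π′ computing f with worst-case error at most ε + δ in which Alice's message is a deterministic function of her input x taking values in M_A^t (so Alice communicates at most ⌈t·log₂|M_A|⌉ bits), Bob sends his message exactly as in Π, and the referee, on Alice's message (m_A¹,…,m_A^t) and Bob's message m_B, outputs 1 with probability (1/t)·Σ_{i=1}^t Pr_{r_C}[Π_C(m_A^i, m_B, r_C) = 1] and 0 otherwise. -/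

import Mathlib

open scoped BigOperators
open scoped Classical

noncomputable section

/-- A probability distribution on a finite type. -/
structure FinDist (Ω : Type) [Fintype Ω] where
  prob : Ω → ℝ
  nonneg : ∀ ω, 0 ≤ prob ω
  sum_one : ∑ ω, prob ω = 1

namespace FinDist

variable {Ω Ω' : Type} [Fintype Ω] [Fintype Ω']

/-- Product of two distributions (independent draw). -/
def prod (p : FinDist Ω) (q : FinDist Ω') : FinDist (Ω × Ω') where
  prob := fun ω => p.prob ω.1 * q.prob ω.2
  nonneg := fun ω => mul_nonneg (p.nonneg _) (q.nonneg _)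
  sum_one := by
    rw [Fintype.sum_prod_type]
    have h : ∀ a : Ω, ∑ b : Ω', p.prob a * q.prob b = p.prob a := by
      intro a; rw [← Finset.mul_sum, q.sum_one, mul_one]
    simp_rw [h]
    exact p.sum_one

/-- Probability of an event. -/
def probEvent (p : FinDist Ω) (E : Ω → Prop) : ℝ :=
  ∑ ω, if E ω then p.prob ω else 0

/-- Probability that a random variable takes a given value. -/
def probVal {α : Type*} (p : FinDist Ω) (A : Ω → α) (a : α) : ℝ :=
  probEvent p (fun ω => A ω = a)

/-- Shannon entropy (in bits) of a random variable on a finite probability space. -/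
def entropy {α : Type*} (p : FinDist Ω) (A : Ω → α) : ℝ :=
  ∑ a ∈ Finset.univ.image A, -(probVal p A a * Real.logb 2 (probVal p A a))

/-- Mutual information (in bits) I(A;B). -/
def mutualInfo {α β : Type*} (p : FinDist Ω) (A : Ω → α) (B : Ω → β) : ℝ :=
  entropy p A + entropy p B - entropy p (fun ω => (A ω, B ω))

/-- Conditional mutual information (in bits) I(A;B|C). -/
def condMutualInfo {α β γ : Type*} (p : FinDist Ω) (A : Ω → α) (B : Ω → β) (C : Ω → γ) : ℝ :=
  entropy p (fun ω => (A ω, C ω)) + entropy p (fun ω => (B ω, C ω))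
    - entropy p (fun ω => (A ω, B ω, C ω)) - entropy p C

/-- Independence of two random variables. -/
def Indep {α β : Type*} (p : FinDist Ω) (A : Ω → α) (B : Ω → β) : Prop :=
  ∀ a b, probEvent p (fun ω => A ω = a ∧ B ω = b) = probVal p A a * probVal p B b

end FinDist

/-- log₂(e). -/
def log2e : ℝ := Real.logb 2 (Real.exp 1)

def g1 (x : ℝ) : ℝ := 2 * Real.logb 2 (x + 1) + 10

def g2 (x y z : ℝ) : ℝ := 2 * Real.logb 2 (2 * (x + y) / (z ^ 2 * log2e) + 1) + 2

def g3 (x : ℝ) : ℝ := 2 * (1 / 2 - x) ^ 2 * log2e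

/-- A private-coin SMP protocol for computing functions f : X × Y → Z. -/
structure PrivSMP (X Y Z : Type) [Fintype X] [Fintype Y] [Fintype Z] where
  MA : Type
  MB : Type
  RA : Type
  RB : Type
  RC : Type
  [fMA : Fintype MA]
  [fMB : Fintype MB]
  [fRA : Fintype RA]
  [fRB : Fintype RB]
  [fRC : Fintype RC]
  [neMA : Nonempty MA]
  [neMB : Nonempty MB]
  [neRA : Nonempty RA]
  [neRB : Nonempty RB]
  [neRC : Nonempty RC]
  dRA : FinDist RA
  dRB : FinDist RB
  dRC : FinDist RC
  pA : X → RA → MA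
  pB : Y → RB → MB
  pC : MA → MB → RC → Z

attribute [instance] PrivSMP.fMA PrivSMP.fMB PrivSMP.fRA PrivSMP.fRB PrivSMP.fRC
attribute [instance] PrivSMP.neMA PrivSMP.neMB PrivSMP.neRA PrivSMP.neRB PrivSMP.neRC

namespace PrivSMP

variable {X Y Z : Type} [Fintype X] [Fintype Y] [Fintype Z]

/-- Joint distribution of all the (independent) randomness of the protocol,
ordered as (r_A, r_B, r_C). -/
def randDist (P : PrivSMP X Y Z) : FinDist (P.RA × P.RB × P.RC) :=
  P.dRA.prod (P.dRB.prod P.dRC)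

/-- Probability of error on input (x, y). -/
def err (P : PrivSMP X Y Z) (f : X → Y → Z) (x : X) (y : Y) : ℝ :=
  FinDist.probEvent P.randDist (fun r => P.pC (P.pA x r.1) (P.pB y r.2.1) r.2.2 ≠ f x y)

/-- The protocol computes f with worst-case error at most ε. -/
def Computes (P : PrivSMP X Y Z) (f : X → Y → Z) (ε : ℝ) : Prop :=
  ∀ x y, P.err f x y ≤ ε

/-- Communication cost ⌈log₂|M_A|⌉ + ⌈log₂|M_B|⌉. -/
def CC (P : PrivSMP X Y Z) : ℝ :=
  (⌈Real.logb 2 (Fintype.card P.MA)⌉ : ℝ) + (⌈Real.logb 2 (Fintype.card P.MB)⌉ : ℝ)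

end PrivSMP

/-- Private-coin communication complexity of f with error ε. -/
def CCprivf {X Y Z : Type} [Fintype X] [Fintype Y] [Fintype Z]
    (f : X → Y → Z) (ε : ℝ) : ℝ :=
  sInf {c : ℝ | ∃ P : PrivSMP X Y Z, P.Computes f ε ∧ P.CC = c}

/-- A shared-randomness SMP protocol for computing functions f : X × Y → Z. -/
structure ShSMP (X Y Z : Type) [Fintype X] [Fintype Y] [Fintype Z] where
  MA : Type
  MB : Type
  RA : Type
  RB : Type
  RC : Type
  RAC : Type
  RBC : Type
  [fMA : Fintype MA]
  [fMB : Fintype MB]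
  [fRA : Fintype RA]
  [fRB : Fintype RB]
  [fRC : Fintype RC]
  [fRAC : Fintype RAC]
  [fRBC : Fintype RBC]
  [neMA : Nonempty MA]
  [neMB : Nonempty MB]
  [neRA : Nonempty RA]
  [neRB : Nonempty RB]
  [neRC : Nonempty RC]
  [neRAC : Nonempty RAC]
  [neRBC : Nonempty RBC]
  dRA : FinDist RA
  dRB : FinDist RB
  dRC : FinDist RC
  dRAC : FinDist RAC
  dRBC : FinDist RBC
  pA : X → RA → RAC → MA
  pB : Y → RB → RBC → MB
  pC : MA → MB → RC → RAC → RBC → Z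

attribute [instance] ShSMP.fMA ShSMP.fMB ShSMP.fRA ShSMP.fRB ShSMP.fRC ShSMP.fRAC ShSMP.fRBC
attribute [instance] ShSMP.neMA ShSMP.neMB ShSMP.neRA ShSMP.neRB ShSMP.neRC ShSMP.neRAC
  ShSMP.neRBC

namespace ShSMP

variable {X Y Z : Type} [Fintype X] [Fintype Y] [Fintype Z]

/-- Joint distribution of all the (independent) randomness of the protocol,
ordered as (r_A, r_B, r_C, r_AC, r_BC). -/
def randDist (P : ShSMP X Y Z) : FinDist (P.RA × P.RB × P.RC × P.RAC × P.RBC) :=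
  P.dRA.prod (P.dRB.prod (P.dRC.prod (P.dRAC.prod P.dRBC)))

/-- Probability of error on input (x, y). -/
def err (P : ShSMP X Y Z) (f : X → Y → Z) (x : X) (y : Y) : ℝ :=
  FinDist.probEvent P.randDist
    (fun r => P.pC (P.pA x r.1 r.2.2.2.1) (P.pB y r.2.1 r.2.2.2.2) r.2.2.1 r.2.2.2.1 r.2.2.2.2
      ≠ f x y)

/-- The protocol computes f with worst-case error at most ε. -/
def Computes (P : ShSMP X Y Z) (f : X → Y → Z) (ε : ℝ) : Prop :=
  ∀ x y, P.err f x y ≤ ε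

/-- Communication cost ⌈log₂|M_A|⌉ + ⌈log₂|M_B|⌉. -/
def CC (P : ShSMP X Y Z) : ℝ :=
  (⌈Real.logb 2 (Fintype.card P.MA)⌉ : ℝ) + (⌈Real.logb 2 (Fintype.card P.MB)⌉ : ℝ)

/-- The underlying probability space when the input pair is drawn from μ, independently
of all the randomness of the protocol. A sample point is
((x, y), (r_A, r_B, r_C, r_AC, r_BC)). -/
def space (P : ShSMP X Y Z) (μ : FinDist (X × Y)) :
    FinDist ((X × Y) × (P.RA × P.RB × P.RC × P.RAC × P.RBC)) :=
  μ.prod P.randDist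

/-- Alice's message as a random variable. -/
def rvMA (P : ShSMP X Y Z) (ω : (X × Y) × (P.RA × P.RB × P.RC × P.RAC × P.RBC)) : P.MA :=
  P.pA ω.1.1 ω.2.1 ω.2.2.2.2.1

/-- Bob's message as a random variable. -/
def rvMB (P : ShSMP X Y Z) (ω : (X × Y) × (P.RA × P.RB × P.RC × P.RAC × P.RBC)) : P.MB :=
  P.pB ω.1.2 ω.2.2.1 ω.2.2.2.2.2

/-- The referee's private randomness as a random variable. -/
def rvRC (P : ShSMP X Y Z) (ω : (X × Y) × (P.RA × P.RB × P.RC × P.RAC × P.RBC)) : P.RC :=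
  ω.2.2.2.1

/-- The Alice–referee shared randomness as a random variable. -/
def rvRAC (P : ShSMP X Y Z) (ω : (X × Y) × (P.RA × P.RB × P.RC × P.RAC × P.RBC)) : P.RAC :=
  ω.2.2.2.2.1

/-- The Bob–referee shared randomness as a random variable. -/
def rvRBC (P : ShSMP X Y Z) (ω : (X × Y) × (P.RA × P.RB × P.RC × P.RAC × P.RBC)) : P.RBC :=
  ω.2.2.2.2.2

/-- Information leakage of the protocol on input distribution μ :
IL(Π,μ) = I(XY ; M_A M_B R_C R_AC R_BC). -/
def IL (P : ShSMP X Y Z) (μ : FinDist (X × Y)) : ℝ :=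
  FinDist.mutualInfo (P.space μ) (fun ω => ω.1)
    (fun ω => (P.rvMA ω, P.rvMB ω, P.rvRC ω, P.rvRAC ω, P.rvRBC ω))

/-- Worst-case (over input distributions) information leakage IL(Π). -/
def ILmax (P : ShSMP X Y Z) : ℝ :=
  ⨆ μ : FinDist (X × Y), P.IL μ

/-- Information complexity of the protocol on input distribution μ :
IC(Π,μ) = I(X ; M_A | R_AC) + I(Y ; M_B | R_BC). -/
def IC (P : ShSMP X Y Z) (μ : FinDist (X × Y)) : ℝ :=
  FinDist.condMutualInfo (P.space μ) (fun ω => ω.1.1) (fun ω => P.rvMA ω) (fun ω => P.rvRAC ω)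
    + FinDist.condMutualInfo (P.space μ) (fun ω => ω.1.2) (fun ω => P.rvMB ω)
      (fun ω => P.rvRBC ω)

/-- Worst-case (over input distributions) information complexity IC(Π). -/
def ICmax (P : ShSMP X Y Z) : ℝ :=
  ⨆ μ : FinDist (X × Y), P.IC μ

end ShSMP

/-- Shared-randomness communication complexity of f with error ε. -/
def CCshf {X Y Z : Type} [Fintype X] [Fintype Y] [Fintype Z]
    (f : X → Y → Z) (ε : ℝ) : ℝ :=
  sInf {c : ℝ | ∃ P : ShSMP X Y Z, P.Computes f ε ∧ P.CC = c}

/-- Information leakage for computing f with error ε. -/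
def ILf {X Y Z : Type} [Fintype X] [Fintype Y] [Fintype Z]
    (f : X → Y → Z) (ε : ℝ) : ℝ :=
  sInf {c : ℝ | ∃ P : ShSMP X Y Z, P.Computes f ε ∧ P.ILmax = c}

/-- Information complexity for computing f with error ε. -/
def ICf {X Y Z : Type} [Fintype X] [Fintype Y] [Fintype Z]
    (f : X → Y → Z) (ε : ℝ) : ℝ :=
  sInf {c : ℝ | ∃ P : ShSMP X Y Z, P.Computes f ε ∧ P.ICmax = c}

/-- An average-length SMP protocol: a shared-randomness SMP protocol whose (countable)
message sets carry length functions satisfying Kraft's inequality. -/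
structure AvgSMP (X Y Z : Type) [Fintype X] [Fintype Y] [Fintype Z] where
  MA : Type
  MB : Type
  RA : Type
  RB : Type
  RC : Type
  RAC : Type
  RBC : Type
  [cMA : Countable MA]
  [cMB : Countable MB]
  [neMA : Nonempty MA]
  [neMB : Nonempty MB]
  [fRA : Fintype RA]
  [fRB : Fintype RB]
  [fRC : Fintype RC]
  [fRAC : Fintype RAC]
  [fRBC : Fintype RBC]
  [neRA : Nonempty RA]
  [neRB : Nonempty RB]
  [neRC : Nonempty RC]
  [neRAC : Nonempty RAC]
  [neRBC : Nonempty RBC]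
  lA : MA → ℕ
  lB : MB → ℕ
  kraftA : ∑' m : MA, ((2 : ℝ) ^ lA m)⁻¹ ≤ 1
  kraftB : ∑' m : MB, ((2 : ℝ) ^ lB m)⁻¹ ≤ 1
  dRA : FinDist RA
  dRB : FinDist RB
  dRC : FinDist RC
  dRAC : FinDist RAC
  dRBC : FinDist RBC
  pA : X → RA → RAC → MA
  pB : Y → RB → RBC → MB
  pC : MA → MB → RC → RAC → RBC → Z

attribute [instance] AvgSMP.cMA AvgSMP.cMB AvgSMP.neMA AvgSMP.neMB
attribute [instance] AvgSMP.fRA AvgSMP.fRB AvgSMP.fRC AvgSMP.fRAC AvgSMP.fRBC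
attribute [instance] AvgSMP.neRA AvgSMP.neRB AvgSMP.neRC AvgSMP.neRAC AvgSMP.neRBC

namespace AvgSMP

variable {X Y Z : Type} [Fintype X] [Fintype Y] [Fintype Z]

/-- Joint distribution of all the (independent) randomness of the protocol,
ordered as (r_A, r_B, r_C, r_AC, r_BC). -/
def randDist (P : AvgSMP X Y Z) : FinDist (P.RA × P.RB × P.RC × P.RAC × P.RBC) :=
  P.dRA.prod (P.dRB.prod (P.dRC.prod (P.dRAC.prod P.dRBC)))

/-- Probability of error on input (x, y). -/
def err (P : AvgSMP X Y Z) (f : X → Y → Z) (x : X) (y : Y) : ℝ :=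
  FinDist.probEvent P.randDist
    (fun r => P.pC (P.pA x r.1 r.2.2.2.1) (P.pB y r.2.1 r.2.2.2.2) r.2.2.1 r.2.2.2.1 r.2.2.2.2
      ≠ f x y)

/-- The protocol computes f with worst-case error at most ε. -/
def Computes (P : AvgSMP X Y Z) (f : X → Y → Z) (ε : ℝ) : Prop :=
  ∀ x y, P.err f x y ≤ ε

/-- Average communication cost on input (x, y): E[ℓ_A(M_A) + ℓ_B(M_B)]. -/
def CCavOn (P : AvgSMP X Y Z) (x : X) (y : Y) : ℝ :=
  ∑ r : P.RA × P.RB × P.RC × P.RAC × P.RBC, P.randDist.prob r *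
    ((P.lA (P.pA x r.1 r.2.2.2.1) : ℝ) + (P.lB (P.pB y r.2.1 r.2.2.2.2) : ℝ))

/-- Average communication cost of the protocol (worst case over inputs). -/
def CCav (P : AvgSMP X Y Z) : ℝ :=
  ⨆ xy : X × Y, P.CCavOn xy.1 xy.2

/-- The underlying probability space when the input pair is drawn from μ. -/
def space (P : AvgSMP X Y Z) (μ : FinDist (X × Y)) :
    FinDist ((X × Y) × (P.RA × P.RB × P.RC × P.RAC × P.RBC)) :=
  μ.prod P.randDist

/-- Information complexity of the protocol on input distribution μ :
IC(Π,μ) = I(X ; M_A | R_AC) + I(Y ; M_B | R_BC). -/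
def IC (P : AvgSMP X Y Z) (μ : FinDist (X × Y)) : ℝ :=
  FinDist.condMutualInfo (P.space μ) (fun ω => ω.1.1)
      (fun ω => P.pA ω.1.1 ω.2.1 ω.2.2.2.2.1) (fun ω => ω.2.2.2.2.1)
    + FinDist.condMutualInfo (P.space μ) (fun ω => ω.1.2)
      (fun ω => P.pB ω.1.2 ω.2.2.1 ω.2.2.2.2.2) (fun ω => ω.2.2.2.2.2)

/-- Worst-case (over input distributions) information complexity. -/
def ICmax (P : AvgSMP X Y Z) : ℝ :=
  ⨆ μ : FinDist (X × Y), P.IC μ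

end AvgSMP

/-- Average-length communication complexity of f with error ε. -/
def CCavf {X Y Z : Type} [Fintype X] [Fintype Y] [Fintype Z]
    (f : X → Y → Z) (ε : ℝ) : ℝ :=
  sInf {c : ℝ | ∃ P : AvgSMP X Y Z, P.Computes f ε ∧ P.CCav = c}

/-- The equality function on n-bit strings. -/
def EQfun (n : ℕ) : (Fin n → Bool) → (Fin n → Bool) → Bool :=
  fun x y => decide (x = y)

end

/-!
Sample `t` independent copies of Alice's random string and let her send the messages they
produce. For a fixed message `m_B` of Bob, the referee's acceptance probability averaged over the
samples is a mean of `t` independent `[0,1]`-valued variables whose expectation is the acceptance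
probability of `Π`, so by Hoeffding's inequality it is off by more than `δ` with probability at most
`2·exp(-2tδ²)`. The choice of `t` makes `|M_B|·2·exp(-2tδ²) ≤ 1/2`, so by the union bound some
sample is `δ`-accurate for all `m_B` at once. Fixing one for each `x` makes Alice deterministic, and
averaging over Bob's coins moves the error by at most `δ`.
-/

open MeasureTheory ProbabilityTheory Real Set

section Hoeffding

variable {Ω : Type*} [MeasurableSpace Ω] {μ : Measure Ω} [IsProbabilityMeasure μ]

lemma measureReal_pi_sum_sub_integral_ge_le {X : Ω → ℝ} (hX : Measurable X) {a b : ℝ}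
    (hab : ∀ ω, X ω ∈ Icc a b) (t : ℕ) {δ : ℝ} (hδ : 0 ≤ δ) :
    (Measure.pi fun _ : Fin t => μ).real {v | t * δ ≤ ∑ i, (X (v i) - ∫ ω, X ω ∂μ)}
      ≤ exp (-(2 * t * δ ^ 2 / (b - a) ^ 2)) := by
  have hsub : ∀ i : Fin t, HasSubgaussianMGF (fun v : Fin t → Ω => X (v i) - ∫ ω, X ω ∂μ)
      ((‖b - a‖₊ / 2) ^ 2) (Measure.pi fun _ => μ) := by
    intro i
    have h := hasSubgaussianMGF_of_mem_Icc (μ := Measure.pi fun _ : Fin t => μ)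
      (X := fun v => X (v i)) (hX.comp (measurable_pi_apply i)).aemeasurable
      (ae_of_all _ fun v => hab (v i))
    rwa [integral_comp_eval hX.aestronglyMeasurable] at h
  have hindep : iIndepFun (fun (i : Fin t) (v : Fin t → Ω) => X (v i) - ∫ ω, X ω ∂μ)
      (Measure.pi fun _ => μ) :=
    iIndepFun_pi (X := fun _ ω => X ω - ∫ ω, X ω ∂μ) fun _ => by fun_prop
  refine (HasSubgaussianMGF.measure_sum_ge_le_of_iIndepFun hindep (s := Finset.univ)
    (fun i _ => hsub i) (by positivity)).trans_eq ?_
  congr 1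
  simp only [Finset.sum_const, Finset.card_univ, Fintype.card_fin, nsmul_eq_mul, NNReal.coe_mul,
    NNReal.coe_natCast, NNReal.coe_pow, NNReal.coe_div, coe_nnnorm, norm_eq_abs, NNReal.coe_ofNat,
    div_pow, sq_abs]
  rcases eq_or_ne (t : ℝ) 0 with h | h
  · simp [h]
  rcases eq_or_ne (b - a) 0 with h' | h'
  · simp [h']
  field_simp

lemma measureReal_pi_abs_avg_sub_integral_gt_le {X : Ω → ℝ} (hX : Measurable X)
    (h01 : ∀ ω, X ω ∈ Icc 0 1) {t : ℕ} (ht : 0 < t) {δ : ℝ} (hδ : 0 ≤ δ) :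
    (Measure.pi fun _ : Fin t => μ).real {v | δ < |(1 / (t : ℝ)) * ∑ i, X (v i) - ∫ ω, X ω ∂μ|}
      ≤ 2 * exp (-(2 * t * δ ^ 2)) := by
  have upper := measureReal_pi_sum_sub_integral_ge_le (μ := μ) hX h01 t hδ
  have lower := measureReal_pi_sum_sub_integral_ge_le (μ := μ) (X := fun ω => -X ω) hX.neg
    (fun ω => ⟨neg_le_neg (h01 ω).2, neg_nonpos.2 (h01 ω).1⟩) t hδ
  simp only [sub_zero, sub_neg_eq_add, zero_add, one_pow, div_one, integral_neg] at upper lower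
  have hsum : ∀ v : Fin t → Ω, ∑ i, (X (v i) - ∫ ω, X ω ∂μ)
      = t * ((1 / (t : ℝ)) * ∑ i, X (v i) - ∫ ω, X ω ∂μ) := fun v => by
    rw [Finset.sum_sub_distrib, Finset.sum_const, Finset.card_univ, Fintype.card_fin, nsmul_eq_mul]
    field_simp
  calc _ ≤ (Measure.pi fun _ : Fin t => μ).real
        ({v | t * δ ≤ ∑ i, (X (v i) - ∫ ω, X ω ∂μ)}
          ∪ {v | t * δ ≤ ∑ i, (-X (v i) + ∫ ω, X ω ∂μ)}) := by
        refine measureReal_mono fun v hv => ?_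
        have hsum' : ∑ i, (-X (v i) + ∫ ω, X ω ∂μ) = -∑ i, (X (v i) - ∫ ω, X ω ∂μ) := by
          rw [← Finset.sum_neg_distrib]; simp only [neg_sub, neg_add_eq_sub]
        rcases lt_abs.1 (show δ < |_| from hv) with h | h
        · left
          show (t : ℝ) * δ ≤ _
          rw [hsum]
          gcongr
        · right
          show (t : ℝ) * δ ≤ _
          rw [hsum', hsum, ← mul_neg]
          gcongr
    _ ≤ _ := (measureReal_union_le _ _).trans (by linarith)

lemma exists_forall_abs_avg_sub_integral_le {B : Type*} [Fintype B] {X : B → Ω → ℝ}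
    (hX : ∀ b, Measurable (X b)) (h01 : ∀ b ω, X b ω ∈ Icc 0 1) {t : ℕ} (ht : 0 < t) {δ : ℝ}
    (hδ : 0 ≤ δ) (hB : (Fintype.card B : ℝ) * (2 * exp (-(2 * t * δ ^ 2))) < 1) :
    ∃ v : Fin t → Ω, ∀ b, |(1 / (t : ℝ)) * ∑ i, X b (v i) - ∫ ω, X b ω ∂μ| ≤ δ := by
  by_contra! hbad
  have hcover : univ ⊆ ⋃ b,
      {v : Fin t → Ω | δ < |(1 / (t : ℝ)) * ∑ i, X b (v i) - ∫ ω, X b ω ∂μ|} :=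
    fun v _ => mem_iUnion.2 (hbad v)
  have := calc (1 : ℝ) = (Measure.pi fun _ : Fin t => μ).real univ := probReal_univ.symm
    _ ≤ ∑ b, (Measure.pi fun _ : Fin t => μ).real
          {v | δ < |(1 / (t : ℝ)) * ∑ i, X b (v i) - ∫ ω, X b ω ∂μ|} :=
        (measureReal_mono hcover).trans (measureReal_iUnion_fintype_le _)
    _ ≤ ∑ _b : B, 2 * exp (-(2 * t * δ ^ 2)) := Finset.sum_le_sum fun b _ =>
        measureReal_pi_abs_avg_sub_integral_gt_le (hX b) (h01 b) ht hδ
    _ = (Fintype.card B : ℝ) * (2 * exp (-(2 * t * δ ^ 2))) := by simp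
  linarith

end Hoeffding

namespace FinDist

variable {Ω Ω' : Type} [Fintype Ω] [Fintype Ω']

def toPMF (p : FinDist Ω) : PMF Ω :=
  PMF.ofFintype (fun ω => ENNReal.ofReal (p.prob ω)) <| by
    rw [← ENNReal.ofReal_sum_of_nonneg fun ω _ => p.nonneg ω, p.sum_one, ENNReal.ofReal_one]

lemma integral_toMeasure [MeasurableSpace Ω] [MeasurableSingletonClass Ω] (p : FinDist Ω)
    (f : Ω → ℝ) : ∫ ω, f ω ∂p.toPMF.toMeasure = ∑ ω, p.prob ω * f ω := by
  simp [PMF.integral_eq_sum, toPMF, p.nonneg]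

lemma exists_forall_abs_avg_sub_sum_le {B : Type*} [Fintype B] (p : FinDist Ω)
    {X : B → Ω → ℝ} (h01 : ∀ b ω, X b ω ∈ Icc 0 1) {t : ℕ} (ht : 0 < t) {δ : ℝ} (hδ : 0 ≤ δ)
    (hB : (Fintype.card B : ℝ) * (2 * exp (-(2 * t * δ ^ 2))) < 1) :
    ∃ v : Fin t → Ω, ∀ b, |(1 / (t : ℝ)) * ∑ i, X b (v i) - ∑ ω, p.prob ω * X b ω| ≤ δ := by
  let _ : MeasurableSpace Ω := ⊤
  have : DiscreteMeasurableSpace Ω := ⟨fun _ => trivial⟩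
  simpa only [integral_toMeasure] using exists_forall_abs_avg_sub_integral_le
    (μ := p.toPMF.toMeasure) (fun b => .of_discrete) h01 ht hδ hB

lemma probEvent_mem_Icc (p : FinDist Ω) (E : Ω → Prop) : p.probEvent E ∈ Icc 0 1 := by
  refine ⟨Finset.sum_nonneg fun ω _ => ?_, p.sum_one ▸ Finset.sum_le_sum fun ω _ => ?_⟩ <;>
    split_ifs <;> simp [p.nonneg ω]

lemma sum_mul_one_sub (p : FinDist Ω) (F : Ω → ℝ) :
    ∑ ω, p.prob ω * (1 - F ω) = 1 - ∑ ω, p.prob ω * F ω := by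
  simp only [mul_sub, mul_one, Finset.sum_sub_distrib, p.sum_one]

lemma probEvent_not (p : FinDist Ω) (E : Ω → Prop) :
    p.probEvent (fun ω => ¬E ω) = 1 - p.probEvent E := by
  simp only [probEvent, ← p.sum_one, ← Finset.sum_sub_distrib]
  exact Finset.sum_congr rfl fun ω _ => by split_ifs <;> simp

lemma probEvent_prod (p : FinDist Ω) (q : FinDist Ω') (E : Ω × Ω' → Prop) :
    (p.prod q).probEvent E = ∑ a, p.prob a * q.probEvent fun b => E (a, b) := by
  simp only [probEvent, prod, Fintype.sum_prod_type, Finset.mul_sum, mul_ite, mul_zero]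

lemma abs_sum_mul_sub_sum_mul_le (p : FinDist Ω) {F G : Ω → ℝ} {δ : ℝ}
    (h : ∀ ω, |F ω - G ω| ≤ δ) : |∑ ω, p.prob ω * F ω - ∑ ω, p.prob ω * G ω| ≤ δ :=
  calc |∑ ω, p.prob ω * F ω - ∑ ω, p.prob ω * G ω| = |∑ ω, p.prob ω * (F ω - G ω)| := by
        simp only [mul_sub, Finset.sum_sub_distrib]
    _ ≤ ∑ ω, p.prob ω * |F ω - G ω| := by
        refine (Finset.abs_sum_le_sum_abs _ _).trans_eq (Finset.sum_congr rfl fun ω _ => ?_)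
        rw [abs_mul, abs_of_nonneg (p.nonneg ω)]
    _ ≤ ∑ ω, p.prob ω * δ := by gcongr with ω; exact p.nonneg ω; exact h ω
    _ = δ := by rw [← Finset.sum_mul, p.sum_one, one_mul]

end FinDist

namespace PrivSMP

variable {X Y : Type} [Fintype X] [Fintype Y]

noncomputable def acceptProb (P : PrivSMP X Y Bool) (x : X) (y : Y) : ℝ :=
  ∑ rB, P.dRB.prob rB * ∑ rA, P.dRA.prob rA *
    P.dRC.probEvent fun rC => P.pC (P.pA x rA) (P.pB y rB) rC = true

lemma err_eq_ite (P : PrivSMP X Y Bool) (f : X → Y → Bool) (x : X) (y : Y) :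
    P.err f x y = if f x y = true then 1 - P.acceptProb x y else P.acceptProb x y := by
  have hswap : P.acceptProb x y = ∑ rA, P.dRA.prob rA * ∑ rB, P.dRB.prob rB *
      P.dRC.probEvent fun rC => P.pC (P.pA x rA) (P.pB y rB) rC = true := by
    simp only [acceptProb, Finset.mul_sum]
    rw [Finset.sum_comm]
    simp only [mul_left_comm]
  simp only [err, randDist, FinDist.probEvent_prod]
  cases f x y
  · simpa only [ne_eq, Bool.not_eq_false, Bool.false_eq_true, if_false] using hswap.symm
  · simp only [ne_eq, FinDist.probEvent_not, FinDist.sum_mul_one_sub, hswap, if_true]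

end PrivSMP

lemma log2e_eq_inv : log2e = (Real.log 2)⁻¹ := by
  rw [log2e, Real.logb, Real.log_exp, one_div]

lemma mul_two_mul_exp_le_half {c δ : ℝ} {t : ℕ} (hc : 0 < c) (hδ : 0 < δ)
    (ht : (logb 2 c + 2) / (2 * δ ^ 2 * log2e) ≤ t) :
    c * (2 * exp (-(2 * t * δ ^ 2))) ≤ 1 / 2 := by
  have hlog2 : 0 < Real.log 2 := Real.log_pos one_lt_two
  have hlog : Real.log (4 * c) ≤ 2 * t * δ ^ 2 := by
    rw [log2e_eq_inv, Real.logb, div_le_iff₀ (by positivity)] at ht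
    rw [Real.log_mul (by norm_num) hc.ne', show (4 : ℝ) = 2 ^ 2 by norm_num, Real.log_pow]
    field_simp at ht
    push_cast
    linarith
  calc c * (2 * exp (-(2 * t * δ ^ 2))) ≤ c * (2 * exp (-Real.log (4 * c))) := by gcongr
    _ = 1 / 2 := by rw [Real.exp_neg, Real.exp_log (by positivity)]; field_simp; norm_num

theorem derandomize_alice_general (X Y : Type) [Fintype X] [Fintype Y]
    (f : X → Y → Bool) (ε δ : ℝ) (hδ : 0 < δ)
    (P : PrivSMP X Y Bool) (hP : P.Computes f ε)
    (t : ℕ) (ht : t = ⌈(Real.logb 2 (Fintype.card P.MB) + 2) / (2 * δ ^ 2 * log2e)⌉₊) :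
    ∃ mA : X → Fin t → P.MA, ∀ x y,
      (if f x y = true
        then 1 - ∑ rB : P.RB, P.dRB.prob rB * ((1 / (t : ℝ)) * ∑ i : Fin t,
          FinDist.probEvent P.dRC (fun rC => P.pC (mA x i) (P.pB y rB) rC = true))
        else ∑ rB : P.RB, P.dRB.prob rB * ((1 / (t : ℝ)) * ∑ i : Fin t,
          FinDist.probEvent P.dRC (fun rC => P.pC (mA x i) (P.pB y rB) rC = true)))
      ≤ ε + δ := by
  have hcard : (1 : ℝ) ≤ Fintype.card P.MB := Nat.one_le_cast.2 Fintype.card_pos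
  have ht0 : 0 < t := ht ▸ Nat.ceil_pos.2 (div_pos (by linarith [logb_nonneg one_lt_two hcard])
    (mul_pos (by positivity) (log2e_eq_inv ▸ inv_pos.2 (Real.log_pos one_lt_two))))
  have hunion : (Fintype.card P.MB : ℝ) * (2 * exp (-(2 * t * δ ^ 2))) < 1 :=
    (mul_two_mul_exp_le_half (by linarith) hδ (ht ▸ Nat.le_ceil _)).trans_lt (by norm_num)
  choose r hr using fun x => P.dRA.exists_forall_abs_avg_sub_sum_le
    (X := fun mB rA => P.dRC.probEvent fun rC => P.pC (P.pA x rA) mB rC = true)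
    (fun _ _ => FinDist.probEvent_mem_Icc _ _) ht0 hδ.le hunion
  refine ⟨fun x i => P.pA x (r x i), fun x y => ?_⟩
  have hclose := abs_le.1 (P.dRB.abs_sum_mul_sub_sum_mul_le fun rB => hr x (P.pB y rB))
  have herr := hP x y
  rw [P.err_eq_ite] at herr
  split_ifs at herr ⊢ <;> unfold PrivSMP.acceptProb at herr <;> linarith [hclose.1, hclose.2]

/-- Derandomization of Alice: from any private-coin SMP protocol
with error ε one obtains, for t = ⌈(log₂|M_B| + 2)/(2δ²·log₂e)⌉, a protocol with
error ε + δ in which Alice deterministically sends a t-tuple of messages from M_A,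
Bob sends his message exactly as in Π, and the referee outputs 1 with probability
(1/t)·Σᵢ Pr_{r_C}[Π_C(m_Aⁱ, m_B, r_C) = 1]. -/
theorem derandomize_alice (X Y : Type) [Fintype X] [Fintype Y] [Nonempty X] [Nonempty Y]
    (f : X → Y → Bool) (ε δ : ℝ) (hδ : 0 < δ)
    (P : PrivSMP X Y Bool) (hP : P.Computes f ε)
    (t : ℕ) (ht : t = ⌈(Real.logb 2 (Fintype.card P.MB) + 2) / (2 * δ ^ 2 * log2e)⌉₊) :
    ∃ mA : X → Fin t → P.MA, ∀ x y,
      (if f x y = true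
        then 1 - ∑ rB : P.RB, P.dRB.prob rB * ((1 / (t : ℝ)) * ∑ i : Fin t,
          FinDist.probEvent P.dRC (fun rC => P.pC (mA x i) (P.pB y rB) rC = true))
        else ∑ rB : P.RB, P.dRB.prob rB * ((1 / (t : ℝ)) * ∑ i : Fin t,
          FinDist.probEvent P.dRC (fun rC => P.pC (mA x i) (P.pB y rB) rC = true)))
      ≤ ε + δ :=
  derandomize_alice_general X Y f ε δ hδ P hP t ht
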